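/- arXiv:physics/0310014 — 3 statements merged into one kernel-verified Lean document; each statement's English description precedes it below -/
import Mathlib

section
/- Given k+1 distinct equidistant points x_{i+j} = x_i + jΔx for j = -k/2,…,k/2 (k even) and values U_{i+j}, there exists a unique polynomial p of degree at most k satisfying the box-average conditions (1/h)∫_{x_{i+j}-h/2}^{x_{i+j}+h/2} p(ξ)dξ = U_{i+j} for all j. -/
/-!
The box integral `Q(x) = ∫_{x-h/2}^{x+h/2} p` of a polynomial `p` is the polynomial
`P(x + h/2) - P(x - h/2)`, `P` an antiderivative of `p`; the leading terms cancel, so `deg Q ≤ deg p`.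
The map `p ↦ Q` is injective: `Q = 0` gives `Q' = p(x + h/2) - p(x - h/2) = 0`, so `p` is
`h`-periodic, hence a constant `c`, and then `Q = h c`. Consequently, at `k + 1` distinct nodes,
`p ↦ (Q(x_j))_j` is an injective linear map from polynomials of degree `≤ k` to `ℝ^{k+1}`, and
therefore a bijection.
-/

open intervalIntegral

open Polynomial

namespace Polynomial

theorem derivative_taylor {R : Type*} [CommSemiring R] (r : R) (p : R[X]) :
    derivative (taylor r p) = taylor r (derivative p) := by
  simp [taylor_apply, derivative_comp]

theorem natDegree_taylor_sub_taylor_le {R : Type*} [CommRing R] (a b : R) (p : R[X]) :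
    (taylor a p - taylor b p).natDegree ≤ p.natDegree - 1 := by
  rcases eq_or_ne p 0 with rfl | hp
  · simp
  rcases eq_or_ne (taylor a p - taylor b p) 0 with hd | hd
  · simp [hd]
  have := natDegree_lt_natDegree hd <| degree_sub_lt_left (by simp only [degree_taylor])
    (by rwa [Ne, taylor_eq_zero]) (by simp only [leadingCoeff_taylor])
  rw [natDegree_taylor] at this
  omega

section Field

variable {K : Type*} [Field K]

theorem eq_C_of_periodic [CharZero K] {p : K[X]} {c : K} (hc : c ≠ 0)
    (hp : Function.Periodic p.eval c) : p = C (p.eval 0) := by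
  refine eq_of_infinite_eval_eq _ _ <| Set.Infinite.mono ?_ <|
    Set.infinite_range_of_injective (f := fun n : ℕ => (n : K) * c) fun m n hmn => ?_
  · rintro _ ⟨n, rfl⟩
    simpa using hp.nat_mul_eq n
  · exact_mod_cast mul_right_cancel₀ hc hmn

noncomputable def antideriv : K[X] →ₗ[K] K[X] :=
  lsum fun n => (n + 1 : K)⁻¹ • monomial (n + 1)

theorem coeff_antideriv_succ (p : K[X]) (n : ℕ) :
    (antideriv p).coeff (n + 1) = p.coeff n / (n + 1) := by
  simp only [antideriv, lsum_apply, sum_def, finsetSum_coeff, LinearMap.smul_apply, coeff_smul,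
    coeff_monomial, Nat.add_right_cancel_iff, smul_eq_mul, mul_ite, mul_zero, Finset.sum_ite_eq']
  split_ifs with h
  · rw [div_eq_inv_mul]
  · simp [notMem_support_iff.mp h]

theorem derivative_antideriv [CharZero K] (p : K[X]) : derivative (antideriv p) = p := by
  ext n
  rw [coeff_derivative, coeff_antideriv_succ]
  field_simp

theorem antideriv_C (c : K) : antideriv (C c) = C c * X := by
  simp [antideriv, lsum_apply, C_mul_X_eq_monomial]

noncomputable def boxIntegral (h : K) : K[X] →ₗ[K] K[X] :=
  (taylor (h / 2) - taylor (-(h / 2))) ∘ₗ antideriv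

theorem boxIntegral_apply (h : K) (p : K[X]) :
    boxIntegral h p = taylor (h / 2) (antideriv p) - taylor (-(h / 2)) (antideriv p) := rfl

theorem natDegree_boxIntegral_le [CharZero K] (h : K) (p : K[X]) :
    (boxIntegral h p).natDegree ≤ p.natDegree :=
  calc (boxIntegral h p).natDegree ≤ (antideriv p).natDegree - 1 :=
        natDegree_taylor_sub_taylor_le _ _ _
    _ = p.natDegree := by rw [← natDegree_derivative, derivative_antideriv]

theorem degree_boxIntegral_le [CharZero K] (h : K) (p : K[X]) :
    (boxIntegral h p).degree ≤ p.degree := by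
  rcases eq_or_ne p 0 with rfl | hp
  · simp
  rw [degree_eq_natDegree hp]
  exact degree_le_of_natDegree_le (natDegree_boxIntegral_le h p)

theorem derivative_boxIntegral [CharZero K] (h : K) (p : K[X]) :
    derivative (boxIntegral h p) = taylor (h / 2) p - taylor (-(h / 2)) p := by
  rw [boxIntegral_apply, derivative_sub, derivative_taylor, derivative_taylor,
    derivative_antideriv]

theorem boxIntegral_C [CharZero K] (h c : K) : boxIntegral h (C c) = C (h * c) := by
  rw [boxIntegral_apply, antideriv_C, taylor_mul, taylor_mul, taylor_C, taylor_C, taylor_X,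
    taylor_X, ← mul_sub, add_sub_add_left_eq_sub, ← C_sub, ← C_mul, sub_neg_eq_add, add_halves,
    mul_comm]

theorem boxIntegral_injective [CharZero K] {h : K} (hh : h ≠ 0) :
    Function.Injective (boxIntegral h) := by
  refine (injective_iff_map_eq_zero _).mpr fun p hp => ?_
  have hper : Function.Periodic p.eval h := fun x => by
    have := congrArg (eval (x + h / 2)) (derivative_boxIntegral h p)
    rw [hp, derivative_zero, eval_zero, eval_sub, taylor_eval, taylor_eval, eq_comm,
      sub_eq_zero] at this
    convert this using 2 <;> ring
  have hconst := eq_C_of_periodic hh hper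
  rw [hconst, boxIntegral_C, C_eq_zero, mul_eq_zero] at hp
  rw [hconst, hp.resolve_left hh, C_0]

theorem eq_zero_of_eval_boxIntegral_eq_zero [CharZero K] {α : Type*} {s : Finset α}
    {x : α → K} (hx : Set.InjOn x s) {h : K} (hh : h ≠ 0) {p : K[X]} (hp : p.degree < s.card)
    (hzero : ∀ j ∈ s, (boxIntegral h p).eval (x j) = 0) : p = 0 :=
  boxIntegral_injective hh <| by
    rw [map_zero]
    exact eq_zero_of_degree_lt_of_eval_index_eq_zero s hx
      ((degree_boxIntegral_le h p).trans_lt hp) hzero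

end Field

theorem integral_eval_eq_sub_antideriv (p : ℝ[X]) (a b : ℝ) :
    ∫ ξ in a..b, p.eval ξ = (antideriv p).eval b - (antideriv p).eval a :=
  integral_eq_sub_of_hasDerivAt
    (fun x _ => by simpa [derivative_antideriv] using (antideriv p).hasDerivAt x)
    (p.continuous.intervalIntegrable a b)

theorem eval_boxIntegral (h x : ℝ) (p : ℝ[X]) :
    (boxIntegral h p).eval x = ∫ ξ in (x - h / 2)..(x + h / 2), p.eval ξ := by
  rw [integral_eval_eq_sub_antideriv, boxIntegral_apply, eval_sub, taylor_eval, taylor_eval,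
    sub_eq_add_neg x]

end Polynomial

theorem existsUnique_boxAverage_interpolant {α : Type*} {s : Finset α} {n : ℕ}
    (hs : s.card = n + 1) {x : α → ℝ} (hx : Set.InjOn x s) {h : ℝ} (hh : h ≠ 0) (U : α → ℝ) :
    ∃! p : ℝ[X], p.natDegree ≤ n ∧
      ∀ j ∈ s, (1 / h) * ∫ ξ in (x j - h / 2)..(x j + h / 2), p.eval ξ = U j := by
  let T : degreeLT ℝ (n + 1) →ₗ[ℝ] s → ℝ :=
    LinearMap.pi (fun j => leval (x j) ∘ₗ boxIntegral h) ∘ₗ (degreeLT ℝ (n + 1)).subtype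
  have mem_iff (p : ℝ[X]) : p ∈ degreeLT ℝ (n + 1) ↔ p.natDegree ≤ n := by
    rw [degreeLT_succ_eq_degreeLE, mem_degreeLE, natDegree_le_iff_degree_le]
  have averages_eq_iff (p : degreeLT ℝ (n + 1)) :
      (∀ j ∈ s, (1 / h) * ∫ ξ in (x j - h / 2)..(x j + h / 2), (p : ℝ[X]).eval ξ = U j) ↔
        T p = fun j => h * U j.1 := by
    simp only [funext_iff, Subtype.forall, T, LinearMap.comp_apply, LinearMap.pi_apply,
      leval_apply, Submodule.subtype_apply, eval_boxIntegral, one_div, inv_mul_eq_iff_eq_mul₀ hh]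
  have hinj : Function.Injective T := by
    refine (injective_iff_map_eq_zero T).mpr fun p hp => Subtype.ext ?_
    refine eq_zero_of_eval_boxIntegral_eq_zero hx hh ?_ fun j hj => congrFun hp ⟨j, hj⟩
    rw [hs, ← mem_degreeLT]
    exact p.2
  have hsurj : Function.Surjective T := by
    refine (LinearMap.injective_iff_surjective_of_finrank_eq_finrank ?_).mp hinj
    rw [(degreeLTEquiv ℝ (n + 1)).finrank_eq, Module.finrank_fin_fun,
      Module.finrank_fintype_fun_eq_card, Fintype.card_coe, hs]
  obtain ⟨p, hp⟩ := hsurj fun j => h * U j.1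
  refine ⟨p, ⟨(mem_iff p).mp p.2, (averages_eq_iff p).mpr hp⟩, fun q ⟨hq, hqU⟩ => ?_⟩
  exact congrArg Subtype.val <|
    hinj (((averages_eq_iff ⟨q, (mem_iff q).mpr hq⟩).mp hqU).trans hp.symm)

theorem stmt8 (k : ℕ) (hk : Even k) (Δx h xi : ℝ) (hΔx : 0 < Δx) (hh : 0 < h)
    (U : ℤ → ℝ) :
    ∃! p : Polynomial ℝ, p.natDegree ≤ k ∧
      ∀ j ∈ Finset.Icc (-(k/2 : ℤ)) ((k : ℤ)/2),
        (1/h) * ∫ ξ in (xi + j * Δx - h/2)..(xi + j * Δx + h/2), p.eval ξ = U j := by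
  obtain ⟨m, rfl⟩ := hk
  refine existsUnique_boxAverage_interpolant (x := fun j : ℤ => xi + j * Δx) ?_ ?_ hh.ne' U
  · rw [Int.card_Icc]
    omega
  · intro i _ j _ hij
    exact_mod_cast mul_right_cancel₀ hΔx.ne' (add_left_cancel hij)
end

section
/- Let p be a quadratic polynomial whose box averages over intervals of width h centered at x_{i-1} = x_i - Δx, x_i, x_{i+1} = x_i + Δx equal U_{i-1}, U_i, U_{i+1} respectively. Then (p'(x_i + h/2) - p'(x_i - h/2))/h = (U_{i+1} - 2U_i + U_{i-1})/Δx². -/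
open intervalIntegral

lemma quad_integral (l u a b c : ℝ) :
    (∫ ξ in l..u, (a * ξ^2 + b * ξ + c)) =
      a * (u^3 - l^3)/3 + b * (u^2 - l^2)/2 + c * (u - l) := by
  have h1 : (∫ ξ in l..u, (a * ξ^2 + b * ξ + c)) =
      (∫ ξ in l..u, a * ξ^2) + (∫ ξ in l..u, b * ξ) + (∫ ξ in l..u, (c : ℝ)) := by
    rw [← intervalIntegral.integral_add, ← intervalIntegral.integral_add]
    · exact ((intervalIntegrable_pow 2).const_mul a).add
        ((intervalIntegrable_id).const_mul b)
    · exact intervalIntegrable_const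
    · exact (intervalIntegrable_pow 2).const_mul a
    · exact (intervalIntegrable_id).const_mul b
  rw [h1, intervalIntegral.integral_const_mul, intervalIntegral.integral_const_mul,
    integral_pow, integral_id, intervalIntegral.integral_const, smul_eq_mul]
  ring

lemma quad_deriv (a b c x : ℝ) :
    deriv (fun x => a * x^2 + b * x + c) x = 2 * a * x + b := by
  have h : HasDerivAt (fun x : ℝ => a * x^2 + b * x + c)
      (a * (↑2 * x ^ (2 - 1)) + b * 1) x :=
    (((hasDerivAt_pow 2 x).const_mul a).add ((hasDerivAt_id x).const_mul b)).add_const c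
  rw [h.deriv]; push_cast; ring

theorem stmt9 (Δx h xi : ℝ) (hΔx : 0 < Δx) (hh : 0 < h)
    (Um Ui Up a b c : ℝ) (p : ℝ → ℝ) (hp : ∀ x, p x = a * x^2 + b * x + c)
    (havgm : (1/h) * ∫ ξ in (xi - Δx - h/2)..(xi - Δx + h/2), p ξ = Um)
    (havg0 : (1/h) * ∫ ξ in (xi - h/2)..(xi + h/2), p ξ = Ui)
    (havgp : (1/h) * ∫ ξ in (xi + Δx - h/2)..(xi + Δx + h/2), p ξ = Up) :
    (deriv p (xi + h/2) - deriv p (xi - h/2)) / h =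
      (Up - 2 * Ui + Um) / Δx^2 := by
  have hpfun : p = fun x => a * x^2 + b * x + c := funext hp
  subst hpfun
  rw [quad_integral] at havgm havg0 havgp
  rw [quad_deriv, quad_deriv]
  have hh' : h ≠ 0 := ne_of_gt hh
  have hΔ' : Δx ≠ 0 := ne_of_gt hΔx
  field_simp at havgm havg0 havgp ⊢
  nlinarith [havgm, havg0, havgp, sq_nonneg h, sq_nonneg Δx]
end

section
/- The gap-tooth scheme of order 2 with exact integration applied to the heat equation u_t = a* u_xx coincides with the forward-Euler central finite difference scheme: if U_i^{n+1} = U_i^n + a*Δt·(s_i^+ - s_i^-)/h where s_i^± are the derivatives at x_i ± h/2 of the quadratic polynomial matching the box averages U_{i-1}^n, U_i^n, U_{i+1}^n, then U_i^{n+1} = U_i^n + a*Δt·(U_{i+1}^n - 2U_i^n + U_{i-1}^n)/Δx². -/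
/-!
The box average of a quadratic `p x = a x² + b x + c` over a box of width `h` centred at `x` is
`p x + a h² / 12`. The correction is the same at every mesh point, so it cancels in the second
difference of the averages, which is therefore `2 a Δx²`. On the other side `p'` is affine with
slope `2 a`, so `s⁺ - s⁻ = 2 a h`. Both updates thus add `a* Δt · 2 a` to `U_i`.
-/

lemma hasDerivAt_quadratic (a b c x : ℝ) :
    HasDerivAt (fun x => a * x ^ 2 + b * x + c) (2 * a * x + b) x := by
  have hsq : HasDerivAt (fun x : ℝ => x ^ 2) (2 * x) x := by
    simpa using hasDerivAt_pow 2 x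
  exact (((hsq.const_mul a).add ((hasDerivAt_id x).const_mul b)).add_const c).congr_deriv
    (by ring)

lemma integral_quadratic (a b c l u : ℝ) :
    ∫ ξ in l..u, (a * ξ ^ 2 + b * ξ + c) =
      a * (u ^ 3 - l ^ 3) / 3 + b * (u ^ 2 - l ^ 2) / 2 + c * (u - l) := by
  have hF : ∀ x ∈ Set.uIcc l u,
      HasDerivAt (fun x : ℝ => a * x ^ 3 / 3 + b * x ^ 2 / 2 + c * x)
        (a * x ^ 2 + b * x + c) x := by
    intro x _
    have hcube : HasDerivAt (fun x : ℝ => x ^ 3) (3 * x ^ 2) x := by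
      simpa using hasDerivAt_pow 3 x
    have hsq : HasDerivAt (fun x : ℝ => x ^ 2) (2 * x) x := by
      simpa using hasDerivAt_pow 2 x
    exact ((((hcube.const_mul a).div_const 3).add ((hsq.const_mul b).div_const 2)).add
      ((hasDerivAt_id x).const_mul c)).congr_deriv (by ring)
  have hcont : Continuous fun ξ : ℝ => a * ξ ^ 2 + b * ξ + c := by fun_prop
  rw [intervalIntegral.integral_eq_sub_of_hasDerivAt hF (hcont.intervalIntegrable l u)]
  ring

lemma boxAverage_quadratic (a b c x : ℝ) {h : ℝ} (hh : h ≠ 0) :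
    (1 / h) * ∫ ξ in (x - h / 2)..(x + h / 2), (a * ξ ^ 2 + b * ξ + c) =
      a * x ^ 2 + b * x + c + a * h ^ 2 / 12 := by
  rw [integral_quadratic]
  field_simp
  ring

theorem stmt10_general (astar Δt Δx h xi : ℝ)
    (hΔx : 0 < Δx) (hh : 0 < h)
    (Um Ui Up a b c : ℝ) (p : ℝ → ℝ) (hp : ∀ x, p x = a * x^2 + b * x + c)
    (havgm : (1/h) * ∫ ξ in (xi - Δx - h/2)..(xi - Δx + h/2), p ξ = Um)
    (havg0 : (1/h) * ∫ ξ in (xi - h/2)..(xi + h/2), p ξ = Ui)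
    (havgp : (1/h) * ∫ ξ in (xi + Δx - h/2)..(xi + Δx + h/2), p ξ = Up)
    (sp sm : ℝ) (hsp : sp = deriv p (xi + h/2)) (hsm : sm = deriv p (xi - h/2)) :
    Ui + astar * Δt * (sp - sm) / h =
      Ui + astar * Δt * (Up - 2 * Ui + Um) / Δx^2 := by
  obtain rfl : p = fun x => a * x ^ 2 + b * x + c := funext hp
  simp only [boxAverage_quadratic _ _ _ _ hh.ne'] at havgm havg0 havgp
  simp only [(hasDerivAt_quadratic _ _ _ _).deriv] at hsp hsm
  have hslopes : sp - sm = 2 * a * h := by rw [hsp, hsm]; ring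
  have hsecond : Up - 2 * Ui + Um = 2 * a * Δx ^ 2 := by
    rw [← havgm, ← havg0, ← havgp]; ring
  rw [hslopes, hsecond]
  field_simp

theorem stmt10 (astar Δt Δx h xi : ℝ) (ha : 0 < astar) (ht : 0 < Δt)
    (hΔx : 0 < Δx) (hh : 0 < h) (hhΔ : h ≤ Δx)
    (Um Ui Up a b c : ℝ) (p : ℝ → ℝ) (hp : ∀ x, p x = a * x^2 + b * x + c)
    (havgm : (1/h) * ∫ ξ in (xi - Δx - h/2)..(xi - Δx + h/2), p ξ = Um)
    (havg0 : (1/h) * ∫ ξ in (xi - h/2)..(xi + h/2), p ξ = Ui)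
    (havgp : (1/h) * ∫ ξ in (xi + Δx - h/2)..(xi + Δx + h/2), p ξ = Up)
    (sp sm : ℝ) (hsp : sp = deriv p (xi + h/2)) (hsm : sm = deriv p (xi - h/2)) :
    Ui + astar * Δt * (sp - sm) / h =
      Ui + astar * Δt * (Up - 2 * Ui + Um) / Δx^2 :=
  stmt10_general astar Δt Δx h xi hΔx hh Um Ui Up a b c p hp havgm havg0 havgp sp sm hsp hsm
end
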